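/- Along any solution of the Lagrange–Routh reduced equation Γ̈ = −‖Γ̇‖²Γ + Γ × Σ (with Σ, b, c, ν as defined from J, ρ, m, g, μ), the total energy E = (1/2)(Γ̇×Γ + (ν−b)Γ)ᵀ J (Γ̇×Γ + (ν−b)Γ) − mg ρᵀΓ is constant. -/

import Mathlib

open Matrix

/-- `b = JΓ·(Γ̇×Γ)/(Γ·JΓ)`. -/
noncomputable def bR (J : Matrix (Fin 3) (Fin 3) ℝ) (Γ Γ' : Fin 3 → ℝ) : ℝ :=
  (J.mulVec Γ ⬝ᵥ crossProduct Γ' Γ) / (Γ ⬝ᵥ J.mulVec Γ)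

/-- `ν = μ/(Γ·JΓ)`. -/
noncomputable def νR (J : Matrix (Fin 3) (Fin 3) ℝ) (μ : ℝ) (Γ : Fin 3 → ℝ) : ℝ :=
  μ / (Γ ⬝ᵥ J.mulVec Γ)

/-- `c = ν(tr(J) − 2‖JΓ‖²/(Γ·JΓ))`. -/
noncomputable def cR (J : Matrix (Fin 3) (Fin 3) ℝ) (μ : ℝ) (Γ : Fin 3 → ℝ) : ℝ :=
  νR J μ Γ * (J.trace - 2 * (J.mulVec Γ ⬝ᵥ J.mulVec Γ) / (Γ ⬝ᵥ J.mulVec Γ))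

/-- `Σ = bΓ̇ + J⁻¹[(J(Γ̇×Γ) − bJΓ)×((Γ̇×Γ) − bΓ) + ν²JΓ×Γ − mgΓ×ρ − cΓ̇]`. -/
noncomputable def SigmaR (J : Matrix (Fin 3) (Fin 3) ℝ) (m g μ : ℝ) (ρ Γ Γ' : Fin 3 → ℝ) :
    Fin 3 → ℝ :=
  bR J Γ Γ' • Γ' + J⁻¹.mulVec
    (crossProduct (J.mulVec (crossProduct Γ' Γ) - bR J Γ Γ' • J.mulVec Γ)
        (crossProduct Γ' Γ - bR J Γ Γ' • Γ)
      + (νR J μ Γ) ^ 2 • crossProduct (J.mulVec Γ) Γ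
      - (m * g) • crossProduct Γ ρ - cR J μ Γ • Γ')

/-- The Lagrange–Routh total energy
`E = (1/2)(Γ̇×Γ + (ν−b)Γ)ᵀ J (Γ̇×Γ + (ν−b)Γ) − mg ρᵀΓ`. -/
noncomputable def ER (J : Matrix (Fin 3) (Fin 3) ℝ) (m g μ : ℝ) (ρ Γ Γ' : Fin 3 → ℝ) : ℝ :=
  (1/2) * ((crossProduct Γ' Γ + (νR J μ Γ - bR J Γ Γ') • Γ) ⬝ᵥ
      J.mulVec (crossProduct Γ' Γ + (νR J μ Γ - bR J Γ Γ') • Γ))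
    - m * g * (ρ ⬝ᵥ Γ)

/-!
Write `ω = Γ̇×Γ + (ν−b)Γ`, so that `E = ½ ω·Jω − mg ρ·Γ`; on the sphere the definitions of `b`
and `ν` say exactly that `Γ × ω = Γ̇` and `Jω·Γ = μ`. Differentiating these two identities
pins down `ω̇`: the reduced equation gives `ω̇ ≡ νΓ̇ + J⁻¹V (mod Γ)`, with `V` the bracket in `Σ`,
and `Jω̇·Γ = −Jω·Γ̇` fixes the `Γ`-component. Splitting `ω = α + νΓ` with `Jα·Γ = 0` yields
`Jω·ω̇ = α·V − ν² JΓ·Γ̇`, and since `α·Γ̇ = 0` and `Γ × α = Γ̇` this is `mg ρ·Γ̇`, so `Ė = 0`.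
-/

theorem LinearMap.hasDerivAt_of_bilinear {𝕜 E F G : Type*} [NontriviallyNormedField 𝕜]
    [CompleteSpace 𝕜] [NormedAddCommGroup E] [NormedSpace 𝕜 E] [FiniteDimensional 𝕜 E]
    [NormedAddCommGroup F] [NormedSpace 𝕜 F] [FiniteDimensional 𝕜 F]
    [NormedAddCommGroup G] [NormedSpace 𝕜 G]
    (B : E →ₗ[𝕜] F →ₗ[𝕜] G) {u : 𝕜 → E} {v : 𝕜 → F} {u' : E} {v' : F} {x : 𝕜}
    (hu : HasDerivAt u u' x) (hv : HasDerivAt v v' x) :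
    HasDerivAt (fun t ↦ B (u t) (v t)) (B (u x) v' + B u' (v x)) x :=
  (LinearMap.toContinuousLinearMap
    (LinearMap.toContinuousLinearMap.toLinearMap ∘ₗ B)).hasDerivAt_of_bilinear
    (fun _ ↦ hu) (fun _ ↦ hv)

section Calculus

variable {𝕜 : Type*} [NontriviallyNormedField 𝕜] [CompleteSpace 𝕜] {m n : Type*} [Fintype m]
  [Fintype n] {x : 𝕜}

theorem HasDerivAt.dotProduct {u v : 𝕜 → n → 𝕜} {u' v' : n → 𝕜}
    (hu : HasDerivAt u u' x) (hv : HasDerivAt v v' x) :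
    HasDerivAt (fun t ↦ u t ⬝ᵥ v t) (u x ⬝ᵥ v' + u' ⬝ᵥ v x) x :=
  (dotProductBilin 𝕜 𝕜).hasDerivAt_of_bilinear hu hv

theorem HasDerivAt.crossProduct {u v : 𝕜 → Fin 3 → 𝕜} {u' v' : Fin 3 → 𝕜}
    (hu : HasDerivAt u u' x) (hv : HasDerivAt v v' x) :
    HasDerivAt (fun t ↦ u t ⨯₃ v t) (u x ⨯₃ v' + u' ⨯₃ v x) x :=
  _root_.crossProduct.hasDerivAt_of_bilinear hu hv

theorem HasDerivAt.mulVec (A : Matrix m n 𝕜) {u : 𝕜 → n → 𝕜} {u' : n → 𝕜}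
    (hu : HasDerivAt u u' x) : HasDerivAt (fun t ↦ A *ᵥ u t) (A *ᵥ u') x :=
  (LinearMap.toContinuousLinearMap (Matrix.mulVecLin A)).hasFDerivAt.comp_hasDerivAt x hu

end Calculus

theorem Matrix.IsSymm.dotProduct_mulVec_comm {n R : Type*} [Fintype n] [CommSemiring R]
    {A : Matrix n n R} (hA : A.IsSymm) (v w : n → R) :
    v ⬝ᵥ A *ᵥ w = w ⬝ᵥ A *ᵥ v := by
  rw [dotProduct_mulVec, ← vecMul_transpose A v, hA.eq, dotProduct_comm]

theorem eq_dotProduct_smul_of_cross_eq_zero {R : Type*} [CommRing R] {u v : Fin 3 → R}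
    (hu : u ⬝ᵥ u = 1) (h : u ⨯₃ v = 0) : v = (u ⬝ᵥ v) • u := by
  have := cross_cross_eq_smul_sub_smul' u u v
  rw [h, map_zero, hu, one_smul] at this
  exact (sub_eq_zero.mp this.symm).symm

section RouthAlgebra

variable (J : Matrix (Fin 3) (Fin 3) ℝ) (m g μ : ℝ) (ρ G H : Fin 3 → ℝ)

/-- The body angular velocity `ω`; `ER` is `½ ω·Jω − mg ρ·Γ`. -/
noncomputable def angVel : Fin 3 → ℝ :=
  H ⨯₃ G + (νR J μ G - bR J G H) • G

noncomputable def angVelPerp : Fin 3 → ℝ :=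
  H ⨯₃ G - bR J G H • G

noncomputable def sigmaBracket : Fin 3 → ℝ :=
  (J *ᵥ angVelPerp J G H) ⨯₃ angVelPerp J G H + νR J μ G ^ 2 • (J *ᵥ G) ⨯₃ G
    - (m * g) • (G ⨯₃ ρ) - cR J μ G • H

noncomputable def reducedAccel : Fin 3 → ℝ :=
  -(H ⬝ᵥ H) • G + G ⨯₃ SigmaR J m g μ ρ G H

theorem angVel_eq : angVel J μ G H = angVelPerp J G H + νR J μ G • G := by
  rw [angVel, angVelPerp, sub_smul]; abel

theorem SigmaR_eq :
    SigmaR J m g μ ρ G H = bR J G H • H + J⁻¹ *ᵥ sigmaBracket J m g μ ρ G H := by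
  rw [SigmaR, sigmaBracket, angVelPerp, mulVec_sub J, mulVec_smul J]

variable {G H}

theorem cross_angVelPerp (hG : G ⬝ᵥ G = 1) (hGH : G ⬝ᵥ H = 0) :
    G ⨯₃ angVelPerp J G H = H := by
  rw [angVelPerp, map_sub, map_smul, cross_self, cross_cross_eq_smul_sub_smul', hG,
    dotProduct_comm, hGH]
  simp

theorem cross_angVel (hG : G ⬝ᵥ G = 1) (hGH : G ⬝ᵥ H = 0) : G ⨯₃ angVel J μ G H = H := by
  rw [angVel_eq, map_add, map_smul, cross_self, cross_angVelPerp J hG hGH, smul_zero, add_zero]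

variable {J}

theorem dotProduct_mulVec_angVelPerp (hJ : J.IsSymm) (hD : G ⬝ᵥ J *ᵥ G ≠ 0) :
    G ⬝ᵥ J *ᵥ angVelPerp J G H = 0 := by
  rw [angVelPerp, mulVec_sub, mulVec_smul, dotProduct_sub, dotProduct_smul,
    hJ.dotProduct_mulVec_comm, bR, smul_eq_mul, div_mul_cancel₀ _ hD, dotProduct_comm, sub_self]

theorem dotProduct_mulVec_angVel (hJ : J.IsSymm) (hD : G ⬝ᵥ J *ᵥ G ≠ 0) :
    G ⬝ᵥ J *ᵥ angVel J μ G H = μ := by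
  rw [angVel_eq, mulVec_add, mulVec_smul, dotProduct_add, dotProduct_mulVec_angVelPerp hJ hD,
    dotProduct_smul, smul_eq_mul, νR, div_mul_cancel₀ _ hD, zero_add]

theorem angVelPerp_dotProduct_sigmaBracket (hG : G ⬝ᵥ G = 1) (hGH : G ⬝ᵥ H = 0) :
    angVelPerp J G H ⬝ᵥ sigmaBracket J m g μ ρ G H =
      νR J μ G ^ 2 * (H ⬝ᵥ J *ᵥ G) + m * g * (ρ ⬝ᵥ H) := by
  have hα : G ⨯₃ angVelPerp J G H = H := cross_angVelPerp J hG hGH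
  have hαH : angVelPerp J G H ⬝ᵥ H = 0 := by
    rw [angVelPerp, sub_dotProduct, smul_dotProduct, dotProduct_comm, dot_self_cross, hGH,
      smul_zero, sub_zero]
  have hJG : angVelPerp J G H ⬝ᵥ (J *ᵥ G) ⨯₃ G = H ⬝ᵥ J *ᵥ G := by
    rw [triple_product_permutation, hα, dotProduct_comm]
  have hρ : angVelPerp J G H ⬝ᵥ G ⨯₃ ρ = -(ρ ⬝ᵥ H) := by
    rw [triple_product_permutation, triple_product_permutation, ← cross_anticomm, hα,
      dotProduct_neg]
  rw [sigmaBracket, dotProduct_sub, dotProduct_sub, dotProduct_add, dotProduct_smul,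
    dotProduct_smul, dotProduct_smul, dot_cross_self, hJG, hρ, hαH]
  simp only [smul_eq_mul]
  ring

end RouthAlgebra

section RouthBalance

variable {J : Matrix (Fin 3) (Fin 3) ℝ} {m g μ : ℝ} {ρ G H : Fin 3 → ℝ}

/-- `W` stands for `ω̇`: `hWcross` and `hWmom` are the time derivatives of `Γ × ω = Γ̇` and
`Γ·Jω = μ`. -/
theorem angVel_dotProduct_mulVec_eq (hJ : J.IsSymm) (hJdet : IsUnit J.det) (hG : G ⬝ᵥ G = 1)
    (hGH : G ⬝ᵥ H = 0) (hD : G ⬝ᵥ J *ᵥ G ≠ 0) {W : Fin 3 → ℝ}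
    (hWcross : G ⨯₃ W + H ⨯₃ angVel J μ G H = reducedAccel J m g μ ρ G H)
    (hWmom : G ⬝ᵥ J *ᵥ W + H ⬝ᵥ J *ᵥ angVel J μ G H = 0) :
    angVel J μ G H ⬝ᵥ J *ᵥ W = m * g * (ρ ⬝ᵥ H) := by
  set α := angVelPerp J G H
  set V := sigmaBracket J m g μ ρ G H
  set ν := νR J μ G
  have hHω : H ⨯₃ angVel J μ G H = -(H ⬝ᵥ H) • G - (ν - bR J G H) • G ⨯₃ H := by
    rw [angVel, map_add, map_smul, cross_cross_eq_smul_sub_smul', dotProduct_comm H G, hGH,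
      ← cross_anticomm G H]
    module
  have hcross : G ⨯₃ W = G ⨯₃ (ν • H + J⁻¹ *ᵥ V) := by
    rw [eq_sub_of_add_eq hWcross, reducedAccel, SigmaR_eq, hHω]
    simp only [map_add, map_smul]
    module
  obtain ⟨β, hW⟩ : ∃ β : ℝ, W = ν • H + J⁻¹ *ᵥ V + β • G :=
    ⟨_, eq_add_of_sub_eq' (eq_dotProduct_smul_of_cross_eq_zero hG
      (v := W - (ν • H + J⁻¹ *ᵥ V)) (by rw [map_sub, hcross, sub_self]))⟩
  have hJV : J *ᵥ (J⁻¹ *ᵥ V) = V := by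
    rw [mulVec_mulVec, mul_nonsing_inv J hJdet, one_mulVec]
  have hαW : α ⬝ᵥ J *ᵥ W = ν * (α ⬝ᵥ J *ᵥ H) + α ⬝ᵥ V := by
    rw [hW, mulVec_add, mulVec_add, mulVec_smul, mulVec_smul, hJV, dotProduct_add, dotProduct_add,
      dotProduct_smul, dotProduct_smul, hJ.dotProduct_mulVec_comm α G,
      dotProduct_mulVec_angVelPerp hJ hD, smul_zero, add_zero, smul_eq_mul]
  have hGW : G ⬝ᵥ J *ᵥ W = -(H ⬝ᵥ J *ᵥ α) - ν * (H ⬝ᵥ J *ᵥ G) := by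
    rw [angVel_eq, mulVec_add, mulVec_smul, dotProduct_add, dotProduct_smul, smul_eq_mul] at hWmom
    linarith
  calc angVel J μ G H ⬝ᵥ J *ᵥ W = α ⬝ᵥ J *ᵥ W + ν * (G ⬝ᵥ J *ᵥ W) := by
        rw [angVel_eq, add_dotProduct, smul_dotProduct, smul_eq_mul]
    _ = m * g * (ρ ⬝ᵥ H) := by
        rw [hαW, hGW, angVelPerp_dotProduct_sigmaBracket m g μ ρ hG hGH,
          hJ.dotProduct_mulVec_comm α H]
        ring

end RouthBalance

theorem differentiableAt_angVel {J : Matrix (Fin 3) (Fin 3) ℝ} {μ : ℝ} {Γ Γ' : ℝ → Fin 3 → ℝ}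
    {t : ℝ} (hΓ : DifferentiableAt ℝ Γ t) (hΓ' : DifferentiableAt ℝ Γ' t)
    (hD : Γ t ⬝ᵥ J *ᵥ Γ t ≠ 0) :
    DifferentiableAt ℝ (fun s ↦ angVel J μ (Γ s) (Γ' s)) t := by
  have hJΓ := hΓ.hasDerivAt.mulVec J
  have hΓ'Γ := hΓ'.hasDerivAt.crossProduct hΓ.hasDerivAt
  have hquad := hΓ.hasDerivAt.dotProduct hJΓ
  have hν := (hasDerivAt_const t μ).div hquad hD
  have hb := (hJΓ.dotProduct hΓ'Γ).div hquad hD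
  exact (hΓ'Γ.add ((hν.sub hb).smul hΓ.hasDerivAt)).differentiableAt

theorem routh_energy_conserved_general
    (J : Matrix (Fin 3) (Fin 3) ℝ) (hJsymm : J.IsSymm) (hJpos : J.PosDef)
    (m g : ℝ) (ρ : Fin 3 → ℝ) (μ : ℝ)
    (Γ Γ' Γ'' : ℝ → Fin 3 → ℝ)
    (hd1 : ∀ t, HasDerivAt Γ (Γ' t) t)
    (hd2 : ∀ t, HasDerivAt Γ' (Γ'' t) t)
    (hS2 : ∀ t, Γ t ⬝ᵥ Γ t = 1) (hT : ∀ t, Γ t ⬝ᵥ Γ' t = 0)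
    (hdyn : ∀ t, Γ'' t = -(Γ' t ⬝ᵥ Γ' t) • Γ t
        + crossProduct (Γ t) (SigmaR J m g μ ρ (Γ t) (Γ' t))) :
    ∀ t s : ℝ, ER J m g μ ρ (Γ t) (Γ' t) = ER J m g μ ρ (Γ s) (Γ' s) := by
  have hJdet : IsUnit J.det := (isUnit_iff_isUnit_det J).mp hJpos.isUnit
  have hD : ∀ t, Γ t ⬝ᵥ J *ᵥ Γ t ≠ 0 := by
    intro t
    have hΓ : Γ t ≠ 0 := fun h ↦ by simpa [h] using hS2 t
    simpa using (hJpos.dotProduct_mulVec_pos hΓ).ne'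
  set ω := fun t ↦ angVel J μ (Γ t) (Γ' t)
  have hω : ∀ t, HasDerivAt ω (deriv ω t) t := fun t ↦
    (differentiableAt_angVel (hd1 t).differentiableAt (hd2 t).differentiableAt (hD t)).hasDerivAt
  have hE : ∀ t, HasDerivAt (fun s ↦ ER J m g μ ρ (Γ s) (Γ' s)) 0 t := by
    intro t
    have hcross : Γ t ⨯₃ deriv ω t + Γ' t ⨯₃ ω t = Γ'' t :=
      ((hd1 t).crossProduct (hω t)).unique ((hd2 t).congr_of_eventuallyEq
        (.of_forall fun s ↦ cross_angVel J μ (hS2 s) (hT s)))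
    have hmom : Γ t ⬝ᵥ J *ᵥ deriv ω t + Γ' t ⬝ᵥ J *ᵥ ω t = 0 :=
      ((hd1 t).dotProduct ((hω t).mulVec J)).unique ((hasDerivAt_const t μ).congr_of_eventuallyEq
        (.of_forall fun s ↦ dotProduct_mulVec_angVel μ hJsymm (hD s)))
    have hpower := angVel_dotProduct_mulVec_eq hJsymm hJdet (hS2 t) (hT t) (hD t)
      (hcross.trans (hdyn t)) hmom
    refine ((((hω t).dotProduct ((hω t).mulVec J)).const_mul (1 / 2)).sub
      (((hasDerivAt_const t ρ).dotProduct (hd1 t)).const_mul (m * g))).congr_deriv ?_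
    rw [hJsymm.dotProduct_mulVec_comm (deriv ω t), hpower]
    simp only [one_div, zero_dotProduct, add_zero]
    ring
  exact is_const_of_deriv_eq_zero (fun t ↦ (hE t).differentiableAt) (fun t ↦ (hE t).deriv)

/-- Along any solution of the Lagrange–Routh reduced equation
`Γ̈ = −‖Γ̇‖²Γ + Γ × Σ`, the total energy `E` is constant. -/
theorem routh_energy_conserved
    (J : Matrix (Fin 3) (Fin 3) ℝ) (hJsymm : J.IsSymm) (hJpos : J.PosDef)
    (m g : ℝ) (hm : 0 < m) (hg : 0 < g) (ρ : Fin 3 → ℝ) (μ : ℝ)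
    (Γ Γ' Γ'' : ℝ → Fin 3 → ℝ)
    (hd1 : ∀ t, HasDerivAt Γ (Γ' t) t)
    (hd2 : ∀ t, HasDerivAt Γ' (Γ'' t) t)
    (hS2 : ∀ t, Γ t ⬝ᵥ Γ t = 1) (hT : ∀ t, Γ t ⬝ᵥ Γ' t = 0)
    (hdyn : ∀ t, Γ'' t = -(Γ' t ⬝ᵥ Γ' t) • Γ t
        + crossProduct (Γ t) (SigmaR J m g μ ρ (Γ t) (Γ' t))) :
    ∀ t s : ℝ, ER J m g μ ρ (Γ t) (Γ' t) = ER J m g μ ρ (Γ s) (Γ' s) :=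
  routh_energy_conserved_general J hJsymm hJpos m g ρ μ Γ Γ' Γ'' hd1 hd2 hS2 hT hdyn
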